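/- Let n be an odd positive integer and let a_0, …, a_n be real numbers with a_n ≠ 0. Define the function P of a real variable m by P(m) = Σ_{j=0}^{n} a_j·2^j·(2m−n)_{n−j}·[4·p_{j+1}(m) + (2m−j)·p_j(m)], where the Pochhammer factors are evaluated at the real argument m. Then P(n/2) = a_n·2^{n+2}·(−n/2)_{n+1}·(1/2)_{n+1}, and this value is nonzero; in particular, P is not the identically zero function. -/

import Mathlib

open Polynomial Finset

/-- The Pochhammer symbol (rising factorial) `(α)_k`. -/
noncomputable def poch (α : ℝ) (k : ℕ) : ℝ := ∏ i ∈ Finset.range k, (α + i)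

/-- The Stirling numbers of the second kind. -/
noncomputable def stirling2 (n k : ℕ) : ℝ :=
  (1 / (Nat.factorial k) : ℝ) *
    ∑ j ∈ Finset.range (k + 1), (k.choose j : ℝ) * (-1) ^ (k - j) * (j : ℝ) ^ n

/-- The quantity `p_j(m)` for a real argument `m`. -/
noncomputable def pPoly (j : ℕ) (m : ℝ) : ℝ :=
  ∑ k ∈ Finset.range (j + 1),
    stirling2 j k * poch (-m) k * poch (1 / 2) k * poch (2 * m - j + 1) (j - k)

/-!
At `m = n/2` every Pochhammer factor `(2m - n)_{n-j}` with `j < n` vanishes, so only the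
top term `j = n` of `P` survives; in it `(2m - (n+1) + 1)_{n+1-k}` kills every term of
`p_{n+1}(m)` except `k = n+1`, where `S(n+1, n+1) = 1`. For odd `n` no factor `-n/2 + i`
of the resulting `(-n/2)_{n+1}` vanishes.
-/

@[simp]
lemma poch_zero_right (α : ℝ) : poch α 0 = 1 := by
  simp [poch]

lemma poch_zero_left {k : ℕ} (hk : k ≠ 0) : poch 0 k = 0 :=
  prod_eq_zero (mem_range.mpr (Nat.pos_of_ne_zero hk)) (by simp)

lemma poch_ne_zero {α : ℝ} {k : ℕ} (h : ∀ i < k, α + i ≠ 0) : poch α k ≠ 0 :=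
  prod_ne_zero_iff.mpr fun i hi ↦ h i (mem_range.mp hi)

lemma poch_pos {α : ℝ} (hα : 0 < α) (k : ℕ) : 0 < poch α k :=
  prod_pos fun i _ ↦ by positivity

lemma poch_neg_half_ne_zero {n : ℕ} (hn : Odd n) (k : ℕ) : poch (-(n : ℝ) / 2) k ≠ 0 := by
  refine poch_ne_zero fun i _ hi ↦ (Nat.not_even_iff_odd.mpr hn) ⟨i, ?_⟩
  have : (n : ℝ) = i + i := by linarith
  exact_mod_cast this

/-- `Δ^k x^k = k!`, written out at `x = 0`. -/
lemma sum_choose_mul_neg_one_pow_mul_pow_self (k : ℕ) :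
    ∑ j ∈ range (k + 1), (k.choose j : ℝ) * (-1) ^ (k - j) * (j : ℝ) ^ k = k.factorial := by
  have h := fwdDiff_iter_eq_sum_shift (h := (1 : ℝ)) (fun r : ℝ ↦ r ^ k) k 0
  rw [fwdDiff_iter_eq_factorial] at h
  simpa [mul_comm, mul_assoc, mul_left_comm] using h.symm

lemma stirling2_self (k : ℕ) : stirling2 k k = 1 := by
  rw [stirling2, sum_choose_mul_neg_one_pow_mul_pow_self]
  field_simp

lemma pPoly_of_two_mul_sub_add_one_eq_zero {j : ℕ} {m : ℝ} (h : 2 * m - j + 1 = 0) :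
    pPoly j m = poch (-m) j * poch (1 / 2) j := by
  rw [pPoly, sum_eq_single_of_mem j (self_mem_range_succ j)]
  · simp [h, stirling2_self]
  · intro k hk hkj
    have : j - k ≠ 0 := by have := mem_range.mp hk; omega
    rw [h, poch_zero_left this, mul_zero]

lemma sum_eval_half (n : ℕ) (a : ℕ → ℝ) :
    ∑ j ∈ range (n + 1),
        a j * 2 ^ j * poch (2 * ((n : ℝ) / 2) - n) (n - j) *
          (4 * pPoly (j + 1) ((n : ℝ) / 2) + (2 * ((n : ℝ) / 2) - j) * pPoly j ((n : ℝ) / 2)) =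
      a n * 2 ^ (n + 2) * poch (-(n : ℝ) / 2) (n + 1) * poch (1 / 2) (n + 1) := by
  have hm : 2 * ((n : ℝ) / 2) - n = 0 := by ring
  rw [sum_eq_single_of_mem n (self_mem_range_succ n)]
  · have h : 2 * ((n : ℝ) / 2) - (n + 1 : ℕ) + 1 = 0 := by push_cast; ring
    rw [pPoly_of_two_mul_sub_add_one_eq_zero h, hm, Nat.sub_self, poch_zero_right, neg_div]
    ring
  · intro j hj hjn
    have : n - j ≠ 0 := by have := mem_range.mp hj; omega
    rw [hm, poch_zero_left this]
    ring

theorem stmt18_general (n : ℕ) (hn : Odd n) (a : ℕ → ℝ) (han : a n ≠ 0)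
    (P : ℝ → ℝ)
    (hP : ∀ m : ℝ, P m =
      ∑ j ∈ Finset.range (n + 1),
        a j * 2 ^ j * poch (2 * m - n) (n - j) *
          (4 * pPoly (j + 1) m + (2 * m - j) * pPoly j m)) :
    P ((n : ℝ) / 2) =
        a n * 2 ^ (n + 2) * poch (-(n : ℝ) / 2) (n + 1) * poch (1 / 2) (n + 1) ∧
      P ((n : ℝ) / 2) ≠ 0 ∧ ¬ ∀ m : ℝ, P m = 0 := by
  have hval := (hP _).trans (sum_eval_half n a)
  have hne : P ((n : ℝ) / 2) ≠ 0 := by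
    rw [hval]
    exact mul_ne_zero (mul_ne_zero (mul_ne_zero han (by positivity)) (poch_neg_half_ne_zero hn _))
      (poch_pos one_half_pos _).ne'
  exact ⟨hval, hne, fun h ↦ hne (h _)⟩

theorem stmt18 (n : ℕ) (hn : Odd n) (hpos : 0 < n) (a : ℕ → ℝ) (han : a n ≠ 0)
    (P : ℝ → ℝ)
    (hP : ∀ m : ℝ, P m =
      ∑ j ∈ Finset.range (n + 1),
        a j * 2 ^ j * poch (2 * m - n) (n - j) *
          (4 * pPoly (j + 1) m + (2 * m - j) * pPoly j m)) :
    P ((n : ℝ) / 2) =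
        a n * 2 ^ (n + 2) * poch (-(n : ℝ) / 2) (n + 1) * poch (1 / 2) (n + 1) ∧
      P ((n : ℝ) / 2) ≠ 0 ∧ ¬ ∀ m : ℝ, P m = 0 :=
  stmt18_general n hn a han P hP
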